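/- Bayes risk under attribute corruption (Lemma on X-corruption): let π be a probability measure on the finite label space Y, E a Markov kernel from Y to X (the experiment), and let P be the probability measure on X × Y determined by P(A × {y}) = π({y}) · E(y)(A). Let τ be a Markov kernel from X × Y to X and let κ be the Markov kernel from X × Y to X × Y sending (x, y) to the product measure τ(x, y) ×ₘ δ_y. Then: (i) P ∘ κ is the probability measure determined by (P ∘ κ)(A × {y}) = π({y}) · E'(y)(A), where E'(y) := (E(y)) bound with the kernel x ↦ τ(x, y) (the partial chain composition E ∘_X τ), so in particular the Y-marginal of P ∘ κ is still π; and (ii) for every hypothesis h, ∫_{X×Y} ℓ(h(x̃), ỹ) d(P ∘ κ)(x̃, ỹ) = ∫_{X×Y} [ ∫_X ℓ(h(x̃), y) dτ(x, y)(x̃) ] dP(x, y), hence for every hypothesis class H the corresponding constrained Bayes risks are equal. -/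

import Mathlib

/-!
The corruption kernel `(x, y) ↦ τ (x, y) ⊗ δ_y` never changes the label, so the corrupted mass of
`A × {y}` only sees the slice of `P` over `y`, which is `π {y} • E y`; integrating `τ (·, y) A`
against that slice gives `π {y}` times the chained experiment. The risk identity is Fubini for
the composition of a measure with a kernel, combined with `∫ f d(μ ⊗ δ_y) = ∫ f (·, y) dμ`;
boundedness of the loss supplies the integrability.
-/

open MeasureTheory ProbabilityTheory
open scoped ENNReal

/-- A hypothesis: a measurable map from `X` to probability measures on `Y`
(equivalently, a Markov kernel from `X` to `Y`). -/
structure Hypothesis (X Y : Type*) [MeasurableSpace X] [MeasurableSpace Y] where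
  toFun : X → Measure Y
  measurable' : Measurable toFun
  prob' : ∀ x, IsProbabilityMeasure (toFun x)

namespace MeasureTheory.Measure

variable {α β E : Type*} {mα : MeasurableSpace α} {mβ : MeasurableSpace β}
  [NormedAddCommGroup E] [NormedSpace ℝ E]

lemma integral_comp {μ : Measure α} {κ : Kernel α β} {f : β → E}
    (hf : Integrable f (κ ∘ₘ μ)) :
    ∫ y, f y ∂(κ ∘ₘ μ) = ∫ x, ∫ y, f y ∂κ x ∂μ := by
  rw [comp_eq_comp_const_apply] at hf ⊢
  rw [Kernel.integral_comp hf, Kernel.const_apply]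

lemma setLIntegral_preimage_snd_singleton {P : Measure (α × β)} {y : β} {c : ℝ≥0∞}
    {ν : Measure α} (hP : ∀ A, MeasurableSet A → P (A ×ˢ {y}) = c * ν A) {f : α → ℝ≥0∞}
    (hf : Measurable f) :
    ∫⁻ p in Prod.snd ⁻¹' {y}, f p.1 ∂P = c * ∫⁻ x, f x ∂ν := by
  have hfst : (P.restrict (Prod.snd ⁻¹' {y})).map Prod.fst = c • ν := by
    ext A hA
    rw [map_apply measurable_fst hA, restrict_apply (measurable_fst hA), ← Set.prod_eq,
      hP A hA]
    rfl
  rw [← lintegral_map hf measurable_fst, hfst, lintegral_smul_measure, smul_eq_mul]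

variable [MeasurableSingletonClass β]

lemma integral_prod_dirac (μ : Measure α) [SFinite μ] (y : β) (f : α × β → E) :
    ∫ z, f z ∂(μ.prod (dirac y)) = ∫ x, f (x, y) ∂μ := by
  rw [prod_dirac, (measurableEmbedding_prod_mk_right y).integral_map]

lemma map_snd_eq_of_apply_univ_prod_singleton [Countable β] {Q : Measure (α × β)}
    {π : Measure β} (hQ : ∀ y, Q (Set.univ ×ˢ {y}) = π {y}) : Q.map Prod.snd = π := by
  refine ext_iff_singleton.mpr fun y => ?_
  rw [map_apply measurable_snd (measurableSet_singleton y), ← hQ y, Set.univ_prod]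

end MeasureTheory.Measure

namespace ProbabilityTheory.Kernel

variable {α β γ E : Type*} {mα : MeasurableSpace α} {mβ : MeasurableSpace β}
  {mγ : MeasurableSpace γ} (τ : Kernel (α × β) γ) [IsSFiniteKernel τ] (P : Measure (α × β))

lemma prod_deterministic_snd_apply (p : α × β) :
    (τ ×ₖ deterministic Prod.snd measurable_snd) p = (τ p).prod (Measure.dirac p.2) := by
  rw [prod_apply, deterministic_apply]

variable [MeasurableSingletonClass β]

lemma comp_prod_deterministic_snd_apply_prod_singleton {A : Set γ} (hA : MeasurableSet A)
    (y : β) :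
    ((τ ×ₖ deterministic Prod.snd measurable_snd) ∘ₘ P) (A ×ˢ {y}) =
      ∫⁻ p in Prod.snd ⁻¹' {y}, τ (p.1, y) A ∂P := by
  have hy : MeasurableSet (Prod.snd ⁻¹' {y} : Set (α × β)) :=
    measurable_snd (measurableSet_singleton y)
  have hslice : ∀ p : α × β, (τ p).prod (Measure.dirac p.2) (A ×ˢ {y}) =
      (Prod.snd ⁻¹' {y}).indicator (fun p => τ (p.1, y) A) p := by
    rintro ⟨x, y'⟩
    rw [Measure.prod_prod, Measure.dirac_apply' _ (measurableSet_singleton y)]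
    by_cases hy' : y' = y <;> simp [hy']
  rw [Measure.bind_apply (hA.prod (measurableSet_singleton y)) (Kernel.aemeasurable _)]
  simp_rw [prod_deterministic_snd_apply, hslice]
  exact lintegral_indicator hy _

lemma integral_comp_prod_deterministic_snd [NormedAddCommGroup E] [NormedSpace ℝ E]
    {f : γ × β → E} (hf : Integrable f ((τ ×ₖ deterministic Prod.snd measurable_snd) ∘ₘ P)) :
    ∫ z, f z ∂((τ ×ₖ deterministic Prod.snd measurable_snd) ∘ₘ P) =
      ∫ p, ∫ x, f (x, p.2) ∂τ p ∂P := by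
  simp_rw [Measure.integral_comp hf, prod_deterministic_snd_apply, Measure.integral_prod_dirac]

end ProbabilityTheory.Kernel

open Kernel Measure in
theorem br_attribute_corruption_general
    {X Y : Type*} [MeasurableSpace X]
    [Fintype Y] [MeasurableSpace Y] [MeasurableSingletonClass Y]
    (loss : Measure Y → Y → ℝ)
    (hmeas : Measurable fun p : Measure Y × Y => loss p.1 p.2)
    (hnonneg : ∀ p y, 0 ≤ loss p y)
    (C : ℝ) (hbdd : ∀ p y, loss p y ≤ C)
    (π : Measure Y) [IsProbabilityMeasure π]
    (E : Kernel Y X) [IsMarkovKernel E]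
    (P : Measure (X × Y)) [IsProbabilityMeasure P]
    (hP : ∀ (A : Set X), MeasurableSet A → ∀ y : Y, P (A ×ˢ {y}) = π {y} * E y A)
    (τ : Kernel (X × Y) X) [IsMarkovKernel τ] :
    ((∀ (A : Set X), MeasurableSet A → ∀ y : Y,
        (P.bind fun p : X × Y => (τ p).prod (Measure.dirac p.2)) (A ×ˢ {y}) =
          π {y} * ((E y).bind fun x => τ (x, y)) A) ∧
      (P.bind fun p : X × Y => (τ p).prod (Measure.dirac p.2)).map Prod.snd = π) ∧
    (∀ h : Hypothesis X Y,
      ∫ z, loss (h.toFun z.1) z.2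
          ∂(P.bind fun p : X × Y => (τ p).prod (Measure.dirac p.2)) =
        ∫ z : X × Y, (∫ x', loss (h.toFun x') z.2 ∂(τ z)) ∂P) ∧
    ∀ H : Set (Hypothesis X Y),
      (⨅ h ∈ H, ∫ z, loss (h.toFun z.1) z.2
          ∂(P.bind fun p : X × Y => (τ p).prod (Measure.dirac p.2))) =
        ⨅ h ∈ H, ∫ z : X × Y, (∫ x', loss (h.toFun x') z.2 ∂(τ z)) ∂P := by
  set κ := τ ×ₖ deterministic Prod.snd measurable_snd
  rw [show (fun p : X × Y => (τ p).prod (dirac p.2)) = κ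
    from funext fun p => (prod_deterministic_snd_apply τ p).symm]
  have hτ_slice (y : Y) : Measurable fun x => τ (x, y) :=
    τ.measurable.comp measurable_prodMk_right
  have hcorrupt (A : Set X) (hA : MeasurableSet A) (y : Y) :
      (κ ∘ₘ P) (A ×ˢ {y}) = π {y} * ((E y).bind fun x => τ (x, y)) A := by
    rw [comp_prod_deterministic_snd_apply_prod_singleton τ P hA,
      setLIntegral_preimage_snd_singleton (f := fun x => τ (x, y) A) (hP · · y)
        ((τ.measurable_coe hA).comp measurable_prodMk_right),
      bind_apply hA (hτ_slice y).aemeasurable]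
  have hrisk (h : Hypothesis X Y) :
      ∫ z, loss (h.toFun z.1) z.2 ∂(κ ∘ₘ P) = ∫ z, ∫ x', loss (h.toFun x') z.2 ∂τ z ∂P := by
    have hloss : Measurable fun z : X × Y => loss (h.toFun z.1) z.2 :=
      hmeas.comp ((h.measurable'.comp measurable_fst).prodMk measurable_snd)
    refine integral_comp_prod_deterministic_snd τ P
      (Integrable.of_bound hloss.aestronglyMeasurable C (ae_of_all _ fun z => ?_))
    rw [Real.norm_of_nonneg (hnonneg _ _)]
    exact hbdd _ _
  refine ⟨⟨hcorrupt, map_snd_eq_of_apply_univ_prod_singleton fun y => ?_⟩, hrisk,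
    fun H => by simp_rw [hrisk]⟩
  rw [hcorrupt _ .univ, bind_apply .univ (hτ_slice y).aemeasurable]
  simp

/-- Bayes risk under attribute corruption: for `P = π_Y × E` and the corruption
`κ = τ ⊗ δ_Y` with `τ : X × Y ⇝ X`, (i) `P ∘ κ = π_Y × (E ∘_X τ)` (so the `Y`-marginal
is still `π`), and (ii) the risk of every hypothesis on `P ∘ κ` equals the risk of the
`τ`-corrected function on `P`, hence the constrained Bayes risks agree. -/
theorem br_attribute_corruption
    {X Y : Type*} [MeasurableSpace X]
    [Fintype Y] [Nonempty Y] [MeasurableSpace Y] [MeasurableSingletonClass Y]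
    (loss : Measure Y → Y → ℝ)
    (hmeas : Measurable fun p : Measure Y × Y => loss p.1 p.2)
    (hnonneg : ∀ p y, 0 ≤ loss p y)
    (C : ℝ) (hbdd : ∀ p y, loss p y ≤ C)
    (π : Measure Y) [IsProbabilityMeasure π]
    (E : Kernel Y X) [IsMarkovKernel E]
    (P : Measure (X × Y)) [IsProbabilityMeasure P]
    (hP : ∀ (A : Set X), MeasurableSet A → ∀ y : Y, P (A ×ˢ {y}) = π {y} * E y A)
    (τ : Kernel (X × Y) X) [IsMarkovKernel τ] :
    ((∀ (A : Set X), MeasurableSet A → ∀ y : Y,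
        (P.bind fun p : X × Y => (τ p).prod (Measure.dirac p.2)) (A ×ˢ {y}) =
          π {y} * ((E y).bind fun x => τ (x, y)) A) ∧
      (P.bind fun p : X × Y => (τ p).prod (Measure.dirac p.2)).map Prod.snd = π) ∧
    (∀ h : Hypothesis X Y,
      ∫ z, loss (h.toFun z.1) z.2
          ∂(P.bind fun p : X × Y => (τ p).prod (Measure.dirac p.2)) =
        ∫ z : X × Y, (∫ x', loss (h.toFun x') z.2 ∂(τ z)) ∂P) ∧
    ∀ H : Set (Hypothesis X Y),
      (⨅ h ∈ H, ∫ z, loss (h.toFun z.1) z.2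
          ∂(P.bind fun p : X × Y => (τ p).prod (Measure.dirac p.2))) =
        ⨅ h ∈ H, ∫ z : X × Y, (∫ x', loss (h.toFun x') z.2 ∂(τ z)) ∂P :=
  br_attribute_corruption_general loss hmeas hnonneg C hbdd π E P hP τ
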